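/- The TSSP scheme conserves the discrete L² norm: if U^{n+1} is obtained from U^n by (i) a discrete sine-transform step multiplying each sine coefficient by exp(−iΔt μ_k²/4), (ii) pointwise multiplication by a unimodular complex factor exp(−iΔt Θ_j) with Θ_j real, and (iii) another step as in (i), then h_r Σ_{j=1}^{J−1} |U_j^{n+1}|² = h_r Σ_{j=1}^{J−1} |U_j^n|². -/

import Mathlib

/-!
The discrete sine vectors `(sin (j k π / J))_{1 ≤ j ≤ J-1}`, `1 ≤ k ≤ J-1`, are orthogonal with
squared length `J / 2`: by product-to-sum this reduces to the cosine sums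
`∑_{j < J} cos (j m π / J) = (1 - (-1)^m) / 2` for `2J ∤ m`, which are geometric sums of a
`2J`-th root of unity and its inverse. Hence sine synthesis scales `ℓ²` norms by `J / 2` and the
sine coefficients by `2 / J`, so a step that multiplies each sine coefficient by a unimodular
factor preserves `∑ |U_j|²`; so does the pointwise unimodular factor `exp (-i Δt Θ_j)`.
-/

open Finset Complex
open scoped Real

theorem geom_sum_add_geom_sum_inv {K : Type*} [Field K] {w : K} (hw0 : w ≠ 0) (hw1 : w ≠ 1)
    {n : ℕ} (hn : w⁻¹ ^ n = w ^ n) :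
    ∑ j ∈ range n, w ^ j + ∑ j ∈ range n, w⁻¹ ^ j = 1 - w ^ n := by
  have h1 : w - 1 ≠ 0 := sub_ne_zero.2 hw1
  have h2 : 1 - w ≠ 0 := sub_ne_zero.2 hw1.symm
  have hinv : w⁻¹ - 1 = (1 - w) / w := by field_simp
  rw [geom_sum_eq hw1, geom_sum_eq (inv_ne_one.2 hw1), hn, hinv]
  field_simp
  ring

theorem sum_range_cos_int_mul_pi_div {J : ℕ} (hJ : J ≠ 0) {m : ℤ} (hm : ¬ 2 * (J : ℤ) ∣ m) :
    ∑ j ∈ range J, Real.cos (j * m * π / J) = if Even m then 0 else 1 := by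
  obtain ⟨w, hw⟩ : ∃ w, w = exp (m * π / J * I) := ⟨_, rfl⟩
  have hJc : (J : ℂ) ≠ 0 := Nat.cast_ne_zero.2 hJ
  have hw1 : w ≠ 1 := by
    rw [hw, Ne, exp_eq_one_iff]
    rintro ⟨n, hn⟩
    refine hm ⟨n, ?_⟩
    have : (m : ℂ) = 2 * J * n := by
      field_simp at hn
      linear_combination hn
    exact_mod_cast this
  have hwJ : w ^ J = (-1) ^ m := by
    rw [hw, ← exp_nat_mul, show (J : ℂ) * (m * π / J * I) = m * (π * I) by
      field_simp, exp_int_mul, exp_pi_mul_I]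
  have hwinv : w⁻¹ ^ J = w ^ J := by
    rw [inv_pow, hwJ, ← zpow_neg, neg_one_zpow_eq_ite, neg_one_zpow_eq_ite]
    simp only [even_neg]
  have hcos : ∀ j : ℕ, (2 * Real.cos (j * m * π / J) : ℂ) = w ^ j + w⁻¹ ^ j := by
    intro j
    rw [ofReal_cos, two_cos, hw, ← exp_neg, ← exp_nat_mul, ← exp_nat_mul]
    push_cast
    ring_nf
  have hsum : (2 * ∑ j ∈ range J, Real.cos (j * m * π / J) : ℂ)
      = ∑ j ∈ range J, w ^ j + ∑ j ∈ range J, w⁻¹ ^ j := by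
    push_cast
    rw [mul_sum, ← sum_add_distrib]
    exact sum_congr rfl fun j _ => by exact_mod_cast hcos j
  rw [geom_sum_add_geom_sum_inv (hw ▸ exp_ne_zero _) hw1 hwinv, hwJ, neg_one_zpow_eq_ite] at hsum
  generalize ∑ j ∈ range J, Real.cos (j * m * π / J) = S at hsum ⊢
  split_ifs at hsum ⊢
  · exact_mod_cast (by linear_combination hsum / 2 : (S : ℂ) = 0)
  · exact_mod_cast (by linear_combination hsum / 2 : (S : ℂ) = 1)

theorem sum_sin_mul_sin_mul_pi_div {J k l : ℕ} (hk : k ∈ Icc 1 (J - 1)) (hl : l ∈ Icc 1 (J - 1)) :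
    ∑ j ∈ Icc 1 (J - 1), Real.sin (j * k * π / J) * Real.sin (j * l * π / J)
      = if k = l then (J : ℝ) / 2 else 0 := by
  rw [mem_Icc] at hk hl
  have hJ : J ≠ 0 := by omega
  have not_dvd : ∀ m : ℤ, m ≠ 0 → |m| < 2 * J → ¬ 2 * (J : ℤ) ∣ m :=
    fun m hm0 hm hdvd => hm0 (Int.eq_zero_of_abs_lt_dvd hdvd hm)
  have hsub : Icc 1 (J - 1) ⊆ range J := fun j hj => by
    rw [mem_Icc] at hj
    rw [mem_range]
    omega
  have hrange : ∑ j ∈ Icc 1 (J - 1), Real.sin (j * k * π / J) * Real.sin (j * l * π / J)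
      = ∑ j ∈ range J, Real.sin (j * k * π / J) * Real.sin (j * l * π / J) := by
    refine sum_subset hsub fun j hjJ hj => ?_
    obtain rfl : j = 0 := by rw [mem_range] at hjJ; rw [mem_Icc] at hj; omega
    simp
  have hprod : ∀ j : ℕ, Real.sin (j * k * π / J) * Real.sin (j * l * π / J)
      = (Real.cos (j * ((k : ℤ) - l : ℤ) * π / J)
          - Real.cos (j * ((k : ℤ) + l : ℤ) * π / J)) / 2 := by
    intro j
    rw [eq_div_iff two_ne_zero, mul_comm, ← mul_assoc, Real.two_mul_sin_mul_sin]
    push_cast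
    ring_nf
  rw [hrange, sum_congr rfl fun j _ => hprod j, ← sum_div, sum_sub_distrib,
    sum_range_cos_int_mul_pi_div hJ (not_dvd ((k : ℤ) + l) (by omega) (by rw [abs_lt]; omega))]
  by_cases hkl : k = l
  · subst hkl
    simp [← two_mul]
  · -- `k - l` and `k + l` have the same parity, so the two cosine sums cancel
    rw [sum_range_cos_int_mul_pi_div hJ (not_dvd _ (by omega) (by rw [abs_lt]; omega))]
    simp [hkl, Int.even_add, Int.even_sub]

theorem sum_sq_sum_mul_of_orthogonal {ι κ : Type*} [DecidableEq κ] {s : Finset ι} {t : Finset κ}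
    {S : ι → κ → ℝ} {c : ℝ}
    (hS : ∀ k ∈ t, ∀ l ∈ t, ∑ j ∈ s, S j k * S j l = if k = l then c else 0) (x : κ → ℝ) :
    ∑ j ∈ s, (∑ k ∈ t, x k * S j k) ^ 2 = c * ∑ k ∈ t, x k ^ 2 :=
  calc ∑ j ∈ s, (∑ k ∈ t, x k * S j k) ^ 2
      = ∑ k ∈ t, ∑ l ∈ t, x k * x l * ∑ j ∈ s, S j k * S j l := by
        simp_rw [sq, sum_mul_sum, mul_sum]
        rw [sum_comm]
        refine sum_congr rfl fun k _ => ?_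
        rw [sum_comm]
        exact sum_congr rfl fun l _ => sum_congr rfl fun j _ => by ring
    _ = c * ∑ k ∈ t, x k ^ 2 := by
        rw [mul_sum]
        refine sum_congr rfl fun k hk => ?_
        rw [sum_congr rfl fun l hl => by rw [hS k hk l hl], sum_eq_single_of_mem k hk]
        · simp [sq, mul_comm]
        · intro l _ hlk
          simp [Ne.symm hlk]

theorem sum_norm_sq_sum_mul_of_orthogonal {ι κ : Type*} [DecidableEq κ] {s : Finset ι}
    {t : Finset κ} {S : ι → κ → ℝ} {c : ℝ}
    (hS : ∀ k ∈ t, ∀ l ∈ t, ∑ j ∈ s, S j k * S j l = if k = l then c else 0) (a : κ → ℂ) :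
    ∑ j ∈ s, ‖∑ k ∈ t, a k * S j k‖ ^ 2 = c * ∑ k ∈ t, ‖a k‖ ^ 2 := by
  simp only [Complex.sq_norm, normSq_apply, re_sum, im_sum, re_mul_ofReal, im_mul_ofReal, ← sq,
    sum_add_distrib, mul_add, sum_sq_sum_mul_of_orthogonal hS]

namespace DiscreteSineTransform

noncomputable def synthesis (J : ℕ) (a : ℕ → ℂ) (j : ℕ) : ℂ :=
  ∑ k ∈ Icc 1 (J - 1), a k * Real.sin (j * k * π / J)

noncomputable def coeff (J : ℕ) (U : ℕ → ℂ) (k : ℕ) : ℂ :=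
  2 / J * ∑ i ∈ Icc 1 (J - 1), U i * Real.sin (i * k * π / J)

noncomputable def multiplier (J : ℕ) (c U : ℕ → ℂ) : ℕ → ℂ :=
  synthesis J fun k => c k * coeff J U k

theorem sum_norm_sq_synthesis (J : ℕ) (a : ℕ → ℂ) :
    ∑ j ∈ Icc 1 (J - 1), ‖synthesis J a j‖ ^ 2 = J / 2 * ∑ k ∈ Icc 1 (J - 1), ‖a k‖ ^ 2 :=
  sum_norm_sq_sum_mul_of_orthogonal (fun _ hk _ hl => sum_sin_mul_sin_mul_pi_div hk hl) a

theorem coeff_eq_synthesis (J : ℕ) (U : ℕ → ℂ) (k : ℕ) :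
    coeff J U k = synthesis J (fun i => 2 / J * U i) k := by
  rw [coeff, synthesis, mul_sum]
  refine sum_congr rfl fun i _ => ?_
  rw [mul_comm (k : ℝ) i, ← mul_assoc]

theorem sum_norm_sq_coeff (J : ℕ) (U : ℕ → ℂ) :
    ∑ k ∈ Icc 1 (J - 1), ‖coeff J U k‖ ^ 2 = 2 / J * ∑ j ∈ Icc 1 (J - 1), ‖U j‖ ^ 2 := by
  have hJ : (J : ℝ) / 2 * (2 / J) ^ 2 = 2 / J := by
    rcases eq_or_ne (J : ℝ) 0 with h | h
    · simp [h]
    · field_simp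
  simp only [coeff_eq_synthesis, sum_norm_sq_synthesis, norm_mul, mul_pow, ← mul_sum,
    ← mul_assoc, norm_div, RCLike.norm_ofNat, Complex.norm_natCast, hJ]

theorem sum_norm_sq_multiplier (J : ℕ) {c : ℕ → ℂ} (hc : ∀ k, ‖c k‖ = 1) (U : ℕ → ℂ) :
    ∑ j ∈ Icc 1 (J - 1), ‖multiplier J c U j‖ ^ 2 = ∑ j ∈ Icc 1 (J - 1), ‖U j‖ ^ 2 := by
  rcases eq_or_ne J 0 with rfl | hJ
  · simp
  have hJ0 : (J : ℝ) ≠ 0 := Nat.cast_ne_zero.2 hJ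
  simp only [multiplier, sum_norm_sq_synthesis, norm_mul, hc, one_mul, sum_norm_sq_coeff,
    ← mul_assoc]
  field_simp

end DiscreteSineTransform

open DiscreteSineTransform in
theorem tssp_norm_conservation_general
    (J : ℕ)
    (Δt : ℝ)
    (hr : ℝ)
    (μ : ℕ → ℝ)
    (Θ : ℕ → ℝ)
    (Un U1 U2 Un1 : ℕ → ℂ)
    (hU1 : ∀ j : ℕ, U1 j =
      ∑ k ∈ Finset.Icc 1 (J - 1),
        Complex.exp (-Complex.I * Δt * (μ k) ^ 2 / 4)
          * ((2 / (J : ℂ)) * ∑ i ∈ Finset.Icc 1 (J - 1),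
              Un i * (Real.sin (i * k * Real.pi / J) : ℂ))
          * (Real.sin (j * k * Real.pi / J) : ℂ))
    (hU2 : ∀ j : ℕ, U2 j = Complex.exp (-Complex.I * Δt * Θ j) * U1 j)
    (hUn1 : ∀ j : ℕ, Un1 j =
      ∑ k ∈ Finset.Icc 1 (J - 1),
        Complex.exp (-Complex.I * Δt * (μ k) ^ 2 / 4)
          * ((2 / (J : ℂ)) * ∑ i ∈ Finset.Icc 1 (J - 1),
              U2 i * (Real.sin (i * k * Real.pi / J) : ℂ))
          * (Real.sin (j * k * Real.pi / J) : ℂ)) :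
    hr * ∑ j ∈ Finset.Icc 1 (J - 1), ‖Un1 j‖ ^ 2
      = hr * ∑ j ∈ Finset.Icc 1 (J - 1), ‖Un j‖ ^ 2 := by
  have hkinetic : ∀ k, ‖exp (-I * Δt * μ k ^ 2 / 4)‖ = 1 := fun k => by
    simp [norm_exp, ← ofReal_pow]
  have hpotential : ∀ j, ‖exp (-I * Δt * Θ j)‖ = 1 := fun j => by simp [norm_exp]
  have hU1' : U1 = multiplier J (fun k => exp (-I * Δt * μ k ^ 2 / 4)) Un := funext hU1
  have hUn1' : Un1 = multiplier J (fun k => exp (-I * Δt * μ k ^ 2 / 4)) U2 := funext hUn1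
  have hU2' : ∀ j, ‖U2 j‖ = ‖U1 j‖ := fun j => by rw [hU2, norm_mul, hpotential, one_mul]
  rw [hUn1', sum_norm_sq_multiplier J hkinetic, sum_congr rfl fun j _ => by rw [hU2' j], hU1',
    sum_norm_sq_multiplier J hkinetic]

theorem tssp_norm_conservation
    (J : ℕ) (hJ : 2 ≤ J) (hJe : Even J)
    (R Δt : ℝ) (hR : 0 < R)
    (hr : ℝ) (hhr : hr = R / J)
    (μ : ℕ → ℝ) (hμ : ∀ k : ℕ, μ k = k * Real.pi / R)
    (Θ : ℕ → ℝ)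
    (Un U1 U2 Un1 : ℕ → ℂ)
    (hU1 : ∀ j : ℕ, U1 j =
      ∑ k ∈ Finset.Icc 1 (J - 1),
        Complex.exp (-Complex.I * Δt * (μ k) ^ 2 / 4)
          * ((2 / (J : ℂ)) * ∑ i ∈ Finset.Icc 1 (J - 1),
              Un i * (Real.sin (i * k * Real.pi / J) : ℂ))
          * (Real.sin (j * k * Real.pi / J) : ℂ))
    (hU2 : ∀ j : ℕ, U2 j = Complex.exp (-Complex.I * Δt * Θ j) * U1 j)
    (hUn1 : ∀ j : ℕ, Un1 j =
      ∑ k ∈ Finset.Icc 1 (J - 1),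
        Complex.exp (-Complex.I * Δt * (μ k) ^ 2 / 4)
          * ((2 / (J : ℂ)) * ∑ i ∈ Finset.Icc 1 (J - 1),
              U2 i * (Real.sin (i * k * Real.pi / J) : ℂ))
          * (Real.sin (j * k * Real.pi / J) : ℂ)) :
    hr * ∑ j ∈ Finset.Icc 1 (J - 1), ‖Un1 j‖ ^ 2
      = hr * ∑ j ∈ Finset.Icc 1 (J - 1), ‖Un j‖ ^ 2 :=
  tssp_norm_conservation_general J Δt hr μ Θ Un U1 U2 Un1 hU1 hU2 hUn1
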